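/- Let Γ be a commutative thick weakly distance-regular digraph in which C(q) exists. Then Γ_{1,q-1}^2 = {Γ_{1,q-2}} or Γ_{1,q-1}^2 = {Γ_{1,q-2}, Γ_{2,q-1}}. -/

import Mathlib

/-!
Common framework: commutative thick weakly distance-regular digraphs.
-/

variable {V : Type*}

/-- There is a directed walk of length `n` from `x` to `y`. -/
def HasWalk (adj : V → V → Prop) (x y : V) (n : ℕ) : Prop :=
  ∃ f : ℕ → V, f 0 = x ∧ f n = y ∧ ∀ i < n, adj (f i) (f (i + 1))

/-- Directed distance `∂(x,y)`. -/
noncomputable def ddist (adj : V → V → Prop) (x y : V) : ℕ :=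
  sInf {n | HasWalk adj x y n}

/-- Two-way distance `∂̃(x,y) = (∂(x,y), ∂(y,x))`. -/
noncomputable def tdist (adj : V → V → Prop) (x y : V) : ℕ × ℕ :=
  (ddist adj x y, ddist adj y x)

/-- The pair `i` is an attained two-way distance, i.e. `i ∈ ∂̃(Γ)`. -/
def Attained (adj : V → V → Prop) (i : ℕ × ℕ) : Prop :=
  ∃ x y : V, tdist adj x y = i

/-- Intersection number `p^h_{i,j}`: for attained `h` it is the common cardinality of
`{z | ∂̃(x,z) = i, ∂̃(z,y) = j}` over pairs with `∂̃(x,y) = h` (and `0` otherwise). -/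
noncomputable def pnum (adj : V → V → Prop) (h i j : ℕ × ℕ) : ℕ :=
  sSup {n | ∃ x y : V, tdist adj x y = h ∧
    n = Set.ncard {z : V | tdist adj x z = i ∧ tdist adj z y = j}}

/-- Valency `k_i = |Γ_i(x)|`. -/
noncomputable def kval (adj : V → V → Prop) (i : ℕ × ℕ) : ℕ :=
  pnum adj (0, 0) i i.swap

/-- Adjacency of the subdigraph `Δ_J`: arcs of type `(1, t-1)` for `t ∈ J`. -/
def deltaAdj (adj : V → V → Prop) (J : Set ℕ) (u v : V) : Prop :=
  ∃ t ∈ J, tdist adj u v = (1, t - 1)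

/-- A circuit of length `s`. -/
def IsCircuit (adj : V → V → Prop) (s : ℕ) (f : ℕ → V) : Prop :=
  0 < s ∧ f s = f 0 ∧ ∀ i < s, adj (f i) (f (i + 1))

/-- Strongly connected. -/
def IsStrong (adj : V → V → Prop) : Prop :=
  ∀ x y : V, ∃ n, HasWalk adj x y n

/-- Weakly distance-regular: the intersection numbers are well defined. -/
def IsWDR (adj : V → V → Prop) : Prop :=
  ∀ (i j : ℕ × ℕ) (x y x' y' : V), tdist adj x y = tdist adj x' y' →
    Set.ncard {z : V | tdist adj x z = i ∧ tdist adj z y = j}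
      = Set.ncard {z : V | tdist adj x' z = i ∧ tdist adj z y' = j}

/-- Thick: `p^h_{i,i}, p^h_{i,i*} ∈ {0, k_i}`. -/
def IsThick (adj : V → V → Prop) : Prop :=
  ∀ h i : ℕ × ℕ,
    (pnum adj h i i = 0 ∨ pnum adj h i i = kval adj i) ∧
    (pnum adj h i i.swap = 0 ∨ pnum adj h i i.swap = kval adj i)

/-- A thick weakly distance-regular digraph (as a property of an adjacency relation). -/
def IsWDRThick (adj : V → V → Prop) : Prop :=
  IsStrong adj ∧ IsWDR adj ∧ IsThick adj

/-- A commutative thick weakly distance-regular digraph. -/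
structure CTWDR (V : Type*) [Fintype V] where
  adj : V → V → Prop
  loopless : ∀ v, ¬ adj v v
  strong : IsStrong adj
  wdr : IsWDR adj
  comm : ∀ (i j : ℕ × ℕ) (x y : V),
    Set.ncard {z : V | tdist adj x z = i ∧ tdist adj z y = j}
      = Set.ncard {z : V | tdist adj x z = j ∧ tdist adj z y = i}
  thick : IsThick adj

namespace CTWDR

variable {V : Type*} [Fintype V] (G : CTWDR V)

/-- Product `EF` of two sets of relations (relations identified with two-way distances). -/
def prodS (E F : Set (ℕ × ℕ)) : Set (ℕ × ℕ) :=
  {h | ∃ i ∈ E, ∃ j ∈ F, pnum G.adj h i j ≠ 0}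

/-- Powers `Γ_i^l` (with `Γ_i^0 = {Γ_{(0,0)}}` and `Γ_i^1 = {Γ_i}`). -/
def pow (i : ℕ × ℕ) : ℕ → Set (ℕ × ℕ)
  | 0 => {(0, 0)}
  | 1 => {i}
  | n + 2 => G.prodS (pow i (n + 1)) {i}

/-- The pair `(1, s-1)` is pure: every circuit of length `s` containing an arc of type
`(1, s-1)` consists of arcs of type `(1, s-1)`. -/
def Pure (s : ℕ) : Prop :=
  ∀ f : ℕ → V, IsCircuit G.adj s f →
    (∃ i < s, tdist G.adj (f i) (f (i + 1)) = (1, s - 1)) →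
    ∀ i < s, tdist G.adj (f i) (f (i + 1)) = (1, s - 1)

/-- `(1, s-1)` is mixed. -/
def Mixed (s : ℕ) : Prop := ¬ G.Pure s

/-- Configuration `C(q)` exists. -/
def Cexists (q : ℕ) : Prop :=
  pnum G.adj (1, q - 2) (1, q - 1) (1, q - 1) ≠ 0 ∧ G.Pure (q - 1)

/-- Configuration `D(q)` exists. -/
def Dexists (q : ℕ) : Prop :=
  pnum G.adj (1, q - 1) (1, q - 2) (q - 2, 1) ≠ 0 ∧ G.Pure (q - 1)

/-- A closed set of relations: `Γ_{i*}Γ_j ⊆ F` for all `i, j ∈ F`. -/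
def Closed (F : Set (ℕ × ℕ)) : Prop :=
  ∀ i ∈ F, ∀ j ∈ F, G.prodS {i.swap} {j} ⊆ F

/-- The minimal closed set `⟨F⟩` containing `F`. -/
def genClosed (F : Set (ℕ × ℕ)) : Set (ℕ × ℕ) :=
  ⋂₀ {C | F ⊆ C ∧ G.Closed C}

/-- The block `F_J(x)` of the closed set generated by `{Γ_{1,t-1}}_{t ∈ J}`. -/
def block (J : Set ℕ) (x : V) : Set V :=
  {y | tdist G.adj x y ∈ G.genClosed {i | ∃ t ∈ J, i = (1, t - 1)}}

end CTWDR

/-!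
Write `i = (1, n + 1)` and `e = (1, n)`, so that `q = n + 2`. By thickness, a nonzero `p^h_{i,i}`
equals `k_i`, so for `∂̃(x, y) = h` every `i`-out-neighbour of `x` is an `i`-in-neighbour of `y`.
Hence vertices with a common `i`-in-neighbour have the same `i`-out-neighbourhood `N`, the value of
`N` moves deterministically along `i`-arcs, and any pair whose type lies in `Γ_i^2` (in particular
an `e`-arc) advances it by two `i`-steps.

If `∂̃(x, y) ∈ Γ_i^2` then `1 ≤ ∂(x, y) ≤ 2` and `n ≤ ∂(y, x)`; rerouting through the pure
`e`-circuit at `x` gives `∂(y, x) ≤ n + 1`. The type `i` itself is impossible, since it would give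
`∂̃(y, y) = i`. For the type `(2, n)`, trading the arcs of a geodesic from `y` to `x` one by one
for `i`-arcs shows that `N` is periodic with period `n + 2` along `i`-walks from `x`, while the
`e`-circuit of length `n + 1` at `x` gives period `2n + 2`. So `N` has period `2`, which would
make an `i`-arc symmetric.
-/

section Walks

variable {adj : V → V → Prop}

lemma hasWalk_zero {x y : V} : HasWalk adj x y 0 ↔ x = y := by
  constructor
  · rintro ⟨f, rfl, rfl, -⟩
    rfl
  · rintro rfl
    exact ⟨fun _ => x, rfl, rfl, fun i hi => absurd hi (Nat.not_lt_zero i)⟩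

lemma hasWalk_one {x y : V} : HasWalk adj x y 1 ↔ adj x y := by
  constructor
  · rintro ⟨f, rfl, rfl, hf⟩
    exact hf 0 Nat.one_pos
  · intro h
    refine ⟨fun t => if t = 0 then x else y, rfl, rfl, fun i hi => ?_⟩
    obtain rfl : i = 0 := by omega
    simpa using h

lemma hasWalk_of_chain (c : ℕ → V) (m k : ℕ) (hc : ∀ j < k, adj (c (m + j)) (c (m + j + 1))) :
    HasWalk adj (c m) (c (m + k)) k :=
  ⟨fun t => c (m + t), rfl, rfl, hc⟩

lemma HasWalk.append {x y z : V} {m k : ℕ} (h₁ : HasWalk adj x y m) (h₂ : HasWalk adj y z k) :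
    HasWalk adj x z (m + k) := by
  obtain ⟨f, rfl, rfl, hf⟩ := h₁
  obtain ⟨g, hg0, rfl, hg⟩ := h₂
  refine ⟨fun t => if t ≤ m then f t else g (t - m), by simp, ?_, fun t ht => ?_⟩
  · rcases Nat.eq_zero_or_pos k with rfl | hk
    · simp [hg0]
    · simp [show ¬ m + k ≤ m by omega]
  · rcases lt_or_ge t m with htm | htm
    · simpa [htm.le, Nat.succ_le_of_lt htm] using hf t htm
    · have := hg (t - m) (by omega)
      rcases htm.eq_or_lt with rfl | htm
      · simpa [hg0] using this
      · simpa [htm.not_ge, show ¬ t + 1 ≤ m by omega, show t + 1 - m = t - m + 1 by omega]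
          using this

lemma ddist_le {x y : V} {n : ℕ} (h : HasWalk adj x y n) : ddist adj x y ≤ n :=
  Nat.sInf_le h

lemma ddist_self (x : V) : ddist adj x x = 0 :=
  Nat.le_zero.mp (ddist_le (hasWalk_zero.mpr rfl))

lemma tdist_self (x : V) : tdist adj x x = (0, 0) := by
  simp [tdist, ddist_self]

lemma tdist_swap (x y : V) : tdist adj y x = (tdist adj x y).swap := rfl

lemma tdist_eq_iff {x y : V} {a b : ℕ} :
    tdist adj x y = (a, b) ↔ ddist adj x y = a ∧ ddist adj y x = b :=
  Prod.ext_iff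

variable (hs : IsStrong adj)
include hs

lemma exists_walk_ddist (x y : V) : HasWalk adj x y (ddist adj x y) :=
  Nat.sInf_mem (hs x y)

lemma ddist_eq_zero_iff {x y : V} : ddist adj x y = 0 ↔ x = y :=
  ⟨fun h => hasWalk_zero.mp (h ▸ exists_walk_ddist hs x y), fun h => h ▸ ddist_self x⟩

lemma ddist_triangle (x y z : V) : ddist adj x z ≤ ddist adj x y + ddist adj y z :=
  ddist_le ((exists_walk_ddist hs x y).append (exists_walk_ddist hs y z))

lemma adj_of_ddist_eq_one {x y : V} (h : ddist adj x y = 1) : adj x y :=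
  hasWalk_one.mp (h ▸ exists_walk_ddist hs x y)

lemma adj_of_tdist_eq {x y : V} {m : ℕ} (h : tdist adj x y = (1, m)) : adj x y :=
  adj_of_ddist_eq_one hs (tdist_eq_iff.mp h).1

lemma pos_of_tdist_eq_one {x y : V} {m : ℕ} (h : tdist adj x y = (1, m)) : 0 < m := by
  obtain ⟨hxy, hyx⟩ := tdist_eq_iff.mp h
  rcases Nat.eq_zero_or_pos m with rfl | hm
  · rw [(ddist_eq_zero_iff hs).mp hyx, ddist_self] at hxy
    omega
  · exact hm

lemma exists_adj_ddist_eq_of_ddist_eq_succ {x y : V} {k : ℕ} (h : ddist adj x y = k + 1) :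
    ∃ x', adj x x' ∧ ddist adj x' y = k := by
  obtain ⟨f, rfl, rfl, hf⟩ := h ▸ exists_walk_ddist hs x y
  have hx' : adj (f 0) (f 1) := hf 0 (by omega)
  have hle : ddist adj (f 1) (f (k + 1)) ≤ k :=
    ddist_le (by
      simpa [Nat.add_comm] using hasWalk_of_chain f 1 k fun j _ => hf (1 + j) (by omega))
  have hge := ddist_triangle hs (f 0) (f 1) (f (k + 1))
  have h01 : ddist adj (f 0) (f 1) ≤ 1 := ddist_le (hasWalk_one.mpr hx')
  exact ⟨f 1, hx', by omega⟩

end Walks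

namespace CTWDR

variable [Fintype V] (G : CTWDR V)

def outNbr (i : ℕ × ℕ) (v : V) : Set V := {w | tdist G.adj v w = i}

lemma pow_two_eq (i : ℕ × ℕ) : G.pow i 2 = {h | pnum G.adj h i i ≠ 0} := by
  ext h
  simp [pow, prodS]

section IntersectionNumbers

variable {h i j : ℕ × ℕ}

lemma pnum_eq_ncard {x y : V} (hxy : tdist G.adj x y = h) :
    pnum G.adj h i j = {z | tdist G.adj x z = i ∧ tdist G.adj z y = j}.ncard := by
  have hset : {n | ∃ x' y' : V, tdist G.adj x' y' = h ∧
      n = {z | tdist G.adj x' z = i ∧ tdist G.adj z y' = j}.ncard} =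
      {{z | tdist G.adj x z = i ∧ tdist G.adj z y = j}.ncard} := by
    ext n
    constructor
    · rintro ⟨x', y', hxy', rfl⟩
      exact G.wdr i j x' y' x y (hxy'.trans hxy.symm)
    · rintro rfl
      exact ⟨x, y, hxy, rfl⟩
  rw [pnum, hset, csSup_singleton]

lemma attained_of_pnum_ne_zero (hp : pnum G.adj h i j ≠ 0) : ∃ x y : V, tdist G.adj x y = h := by
  by_contra! hno
  refine hp ?_
  have hempty : {n | ∃ x y : V, tdist G.adj x y = h ∧
      n = {z | tdist G.adj x z = i ∧ tdist G.adj z y = j}.ncard} = ∅ :=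
    Set.eq_empty_of_forall_notMem fun _ ⟨x, y, hxy, _⟩ => hno x y hxy
  rw [pnum, hempty, csSup_empty, bot_eq_zero]

lemma exists_mid_of_pnum_ne_zero (hp : pnum G.adj h i j ≠ 0) {x y : V}
    (hxy : tdist G.adj x y = h) : ∃ z, tdist G.adj x z = i ∧ tdist G.adj z y = j :=
  Set.nonempty_of_ncard_ne_zero (G.pnum_eq_ncard hxy ▸ hp)

lemma pnum_tdist_ne_zero {x y z : V} (hxz : tdist G.adj x z = i) (hzy : tdist G.adj z y = j) :
    pnum G.adj (tdist G.adj x y) i j ≠ 0 := by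
  rw [G.pnum_eq_ncard rfl]
  exact ((Set.ncard_pos (Set.toFinite _)).mpr ⟨z, show _ ∧ _ from ⟨hxz, hzy⟩⟩).ne'

lemma kval_eq_ncard_outNbr (i : ℕ × ℕ) (x : V) : kval G.adj i = (G.outNbr i x).ncard := by
  rw [kval, G.pnum_eq_ncard (tdist_self x)]
  congr 1
  ext z
  exact ⟨And.left, fun hz => ⟨hz, by rw [tdist_swap, hz]⟩⟩

lemma outNbr_nonempty (hi : ∃ u w : V, tdist G.adj u w = i) (v : V) : (G.outNbr i v).Nonempty := by
  obtain ⟨u, w, huw⟩ := hi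
  apply Set.nonempty_of_ncard_ne_zero
  rw [← G.kval_eq_ncard_outNbr, G.kval_eq_ncard_outNbr i u]
  exact ((Set.ncard_pos (Set.toFinite _)).mpr ⟨w, huw⟩).ne'

lemma tdist_eq_of_pnum_ne_zero (hp : pnum G.adj h i i ≠ 0) {x y z : V}
    (hxy : tdist G.adj x y = h) (hxz : tdist G.adj x z = i) : tdist G.adj z y = i := by
  have hk : pnum G.adj h i i = kval G.adj i := (G.thick h i).1.resolve_left hp
  have hset : {z | tdist G.adj x z = i ∧ tdist G.adj z y = i} = G.outNbr i x :=
    Set.eq_of_subset_of_ncard_le (fun _ hz => hz.1)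
      (by rw [← G.pnum_eq_ncard hxy, hk, G.kval_eq_ncard_outNbr i x]) (Set.toFinite _)
  exact (hset.symm ▸ hxz : z ∈ {z | tdist G.adj x z = i ∧ tdist G.adj z y = i}).2

lemma eq_zero_of_pnum_self_ne_zero (hp : pnum G.adj i i i ≠ 0) : i = (0, 0) := by
  obtain ⟨x, y, hxy⟩ := G.attained_of_pnum_ne_zero hp
  rw [← G.tdist_eq_of_pnum_ne_zero hp hxy hxy, tdist_self]

end IntersectionNumbers

section OutNeighbourhoods

variable {i : ℕ × ℕ}

lemma outNbr_eq_of_common_pred {t z z' : V} (hz : tdist G.adj t z = i)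
    (hz' : tdist G.adj t z' = i) : G.outNbr i z = G.outNbr i z' := by
  have key : ∀ {z z'}, tdist G.adj t z = i → tdist G.adj t z' = i →
      G.outNbr i z ⊆ G.outNbr i z' := fun hz hz' _ hd =>
    G.tdist_eq_of_pnum_ne_zero (G.pnum_tdist_ne_zero hz hd) rfl hz'
  exact (key hz hz').antisymm (key hz' hz)

lemma outNbr_eq_of_outNbr_eq {a b a' b' : V} (hab : G.outNbr i a = G.outNbr i b)
    (ha : tdist G.adj a a' = i) (hb : tdist G.adj b b' = i) : G.outNbr i a' = G.outNbr i b' :=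
  G.outNbr_eq_of_common_pred ha (show b' ∈ G.outNbr i a from hab ▸ hb)

lemma outNbr_eq_of_pnum_ne_zero {g : ℕ × ℕ} (hg : pnum G.adj g i i ≠ 0) {a b a' a'' : V}
    (hab : tdist G.adj a b = g) (ha' : tdist G.adj a a' = i) (ha'' : tdist G.adj a' a'' = i) :
    G.outNbr i b = G.outNbr i a'' :=
  G.outNbr_eq_of_common_pred (G.tdist_eq_of_pnum_ne_zero hg hab ha') ha''

lemma outNbr_ne_of_tdist_eq (hi : i.1 ≠ i.2) {a b c : V} (hab : tdist G.adj a b = i)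
    (hbc : tdist G.adj b c = i) : G.outNbr i a ≠ G.outNbr i c := by
  intro hac
  have hcb : tdist G.adj c b = i := show b ∈ G.outNbr i c from hac ▸ hab
  rw [tdist_swap, hbc] at hcb
  exact hi (congrArg Prod.snd hcb)

variable {f : V → V} (hf : ∀ v, tdist G.adj v (f v) = i)
include hf

lemma outNbr_iterate_eq {a b : V} (hab : G.outNbr i a = G.outNbr i b) (k : ℕ) :
    G.outNbr i (f^[k] a) = G.outNbr i (f^[k] b) := by
  induction k with
  | zero => exact hab
  | succ k ih =>
    simpa only [Function.iterate_succ_apply'] using G.outNbr_eq_of_outNbr_eq ih (hf _) (hf _)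

lemma outNbr_eq_iterate_two {g : ℕ × ℕ} (hg : pnum G.adj g i i ≠ 0) {a b : V}
    (hab : tdist G.adj a b = g) : G.outNbr i b = G.outNbr i (f^[2] a) :=
  G.outNbr_eq_of_pnum_ne_zero hg hab (hf a) (hf (f a))

lemma outNbr_eq_iterate_of_chain (c : ℕ → V) (k : ℕ)
    (hc : ∀ j < k, pnum G.adj (tdist G.adj (c j) (c (j + 1))) i i ≠ 0) :
    G.outNbr i (c k) = G.outNbr i (f^[2 * k] (c 0)) := by
  induction k with
  | zero => rfl
  | succ k ih =>
    rw [G.outNbr_eq_iterate_two hf (hc k k.lt_succ_self) rfl,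
      G.outNbr_iterate_eq hf (ih fun j hj => hc j (by omega)) 2, ← Function.iterate_add_apply]
    ring_nf

end OutNeighbourhoods

lemma exists_circuit_of_pure {n : ℕ} (hPure : G.Pure (n + 1)) {u v : V}
    (huv : tdist G.adj u v = (1, n)) :
    ∃ c : ℕ → V, c 0 = u ∧ c 1 = v ∧ c (n + 1) = u ∧
      ∀ j < n + 1, tdist G.adj (c j) (c (j + 1)) = (1, n) := by
  obtain ⟨huv₁, hvu⟩ := tdist_eq_iff.mp huv
  obtain ⟨g, hg0, hgn, hg⟩ := hvu ▸ exists_walk_ddist G.strong v u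
  let c : ℕ → V := fun | 0 => u | t + 1 => g t
  have hcirc : IsCircuit G.adj (n + 1) c := by
    refine ⟨n.succ_pos, hgn, fun j hj => ?_⟩
    cases j with
    | zero => simpa [c, hg0] using adj_of_ddist_eq_one G.strong huv₁
    | succ j => exact hg j (by omega)
  have hall := hPure c hcirc ⟨0, n.succ_pos, by simpa [c, hg0] using huv⟩
  exact ⟨c, rfl, hg0, hgn, by simpa using hall⟩

lemma outNbr_eq_iterate_of_geodesic {n : ℕ} (hh : pnum G.adj (2, n) (1, n + 1) (1, n + 1) ≠ 0)
    {f : V → V} (hf : ∀ v, tdist G.adj v (f v) = (1, n + 1)) (k : ℕ) :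
    ∀ {a b w : V}, tdist G.adj a b = (2, n) → ddist G.adj b w = k → k + ddist G.adj w a = n →
      G.outNbr (1, n + 1) w = G.outNbr (1, n + 1) (f^[k] b) := by
  induction k with
  | zero =>
    intro a b w _ hbw _
    rw [(ddist_eq_zero_iff G.strong).mp hbw]
    rfl
  | succ k ih =>
    intro a b w hab hbw hwa
    obtain ⟨b', hbb', hb'w⟩ := exists_adj_ddist_eq_of_ddist_eq_succ G.strong hbw
    have hbb'₁ : ddist G.adj b b' ≤ 1 := ddist_le (hasWalk_one.mpr hbb')
    have hZb := tdist_eq_iff.mp (G.tdist_eq_of_pnum_ne_zero hh hab (hf a))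
    have haZ := tdist_eq_iff.mp (hf a)
    have hab' := tdist_eq_iff.mp hab
    have := ddist_triangle G.strong b' w a
    have := ddist_triangle G.strong b b' a
    have := ddist_triangle G.strong b' a (f a)
    have := ddist_triangle G.strong b b' (f a)
    have := ddist_triangle G.strong (f a) b b'
    have := ddist_triangle G.strong (f a) b' a
    have hZb' : tdist G.adj (f a) b' = (2, n) := tdist_eq_iff.mpr ⟨by omega, by omega⟩
    have := ddist_triangle G.strong w a (f a)
    have := ddist_triangle G.strong b' w (f a)
    have hwZ : k + ddist G.adj w (f a) = n := by omega
    rw [ih hZb' hb'w hwZ, Function.iterate_succ_apply]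
    apply G.outNbr_iterate_eq hf
    exact (G.outNbr_eq_iterate_two hf hh hZb').trans
      (G.outNbr_eq_of_outNbr_eq (G.outNbr_eq_iterate_two hf hh hab) (hf b) (hf _)).symm

section ConfigurationC

variable {n : ℕ} (hCp : pnum G.adj (1, n) (1, n + 1) (1, n + 1) ≠ 0) (hPure : G.Pure (n + 1))
include hCp hPure

lemma ddist_le_of_pnum_ne_zero (hn : 1 ≤ n) {h : ℕ × ℕ}
    (hh : pnum G.adj h (1, n + 1) (1, n + 1) ≠ 0) {x y : V} (hxy : tdist G.adj x y = h) :
    ddist G.adj y x ≤ n + 1 := by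
  obtain ⟨z, hxz, hzy⟩ := G.exists_mid_of_pnum_ne_zero hh hxy
  obtain ⟨c₁, hc₁⟩ := G.outNbr_nonempty (G.attained_of_pnum_ne_zero hCp) x
  obtain ⟨c, hc0, -, hcn, hc⟩ := G.exists_circuit_of_pure hPure hc₁
  subst hc0
  have hN : G.outNbr (1, n + 1) (c 1) = G.outNbr (1, n + 1) y :=
    G.outNbr_eq_of_pnum_ne_zero hCp (hc 0 n.succ_pos) hxz hzy
  obtain ⟨t, hyt⟩ := G.outNbr_nonempty ⟨c 0, z, hxz⟩ y
  have htc : tdist G.adj t (c 2) = (1, n + 1) :=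
    G.tdist_eq_of_pnum_ne_zero hCp (hc 1 (by omega))
      (show t ∈ G.outNbr (1, n + 1) (c 1) from hN ▸ hyt)
  have hcx : ddist G.adj (c 2) (c 0) ≤ n - 1 := by
    have hwalk := hasWalk_of_chain c 2 (n - 1) fun j _ => adj_of_tdist_eq G.strong (hc _ (by omega))
    rw [show 2 + (n - 1) = n + 1 by omega, hcn] at hwalk
    exact ddist_le hwalk
  have := ddist_triangle G.strong y t (c 0)
  have := ddist_triangle G.strong t (c 2) (c 0)
  have := (tdist_eq_iff.mp hyt).1
  have := (tdist_eq_iff.mp htc).1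
  omega

lemma pnum_two_eq_zero (hn : 1 ≤ n) : pnum G.adj (2, n) (1, n + 1) (1, n + 1) = 0 := by
  by_contra hh
  obtain ⟨x, y, hxy⟩ := G.attained_of_pnum_ne_zero hCp
  obtain ⟨z, hxz, -⟩ := G.exists_mid_of_pnum_ne_zero hCp hxy
  choose f hf using G.outNbr_nonempty ⟨x, z, hxz⟩
  obtain ⟨a, b, hab⟩ := G.attained_of_pnum_ne_zero hh
  have hper₁ : G.outNbr (1, n + 1) a = G.outNbr (1, n + 1) (f^[n + 2] a) := by
    rw [G.outNbr_eq_iterate_of_geodesic hh hf n hab (tdist_eq_iff.mp hab).2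
        (by rw [ddist_self, Nat.add_zero]),
      G.outNbr_iterate_eq hf (G.outNbr_eq_iterate_two hf hh hab) n, ← Function.iterate_add_apply]
  have hper₂ : G.outNbr (1, n + 1) a = G.outNbr (1, n + 1) (f^[2 * (n + 1)] a) := by
    obtain ⟨c₁, hc₁⟩ := G.outNbr_nonempty ⟨x, y, hxy⟩ a
    obtain ⟨c, hc0, -, hcn, hc⟩ := G.exists_circuit_of_pure hPure hc₁
    have := G.outNbr_eq_iterate_of_chain hf c (n + 1) fun j hj => (hc j hj).symm ▸ hCp
    rwa [hcn, hc0] at this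
  have hper : G.outNbr (1, n + 1) (f^[2] a) = G.outNbr (1, n + 1) a := calc
    _ = G.outNbr (1, n + 1) (f^[2] (f^[2 * (n + 1)] a)) := G.outNbr_iterate_eq hf hper₂ 2
    _ = G.outNbr (1, n + 1) (f^[n + 2] (f^[n + 2] a)) := by
      simp only [← Function.iterate_add_apply]
      ring_nf
    _ = G.outNbr (1, n + 1) (f^[n + 2] a) := (G.outNbr_iterate_eq hf hper₁ (n + 2)).symm
    _ = G.outNbr (1, n + 1) a := hper₁.symm
  exact G.outNbr_ne_of_tdist_eq (show 1 ≠ n + 1 by omega) (hf a) (hf (f a)) hper.symm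

lemma pow_two_subset (hn : 1 ≤ n) : G.pow (1, n + 1) 2 ⊆ {(1, n), (2, n + 1)} := by
  rw [pow_two_eq]
  intro h hh
  obtain ⟨x, y, rfl⟩ := G.attained_of_pnum_ne_zero hh
  obtain ⟨z, hxz, hzy⟩ := G.exists_mid_of_pnum_ne_zero hh rfl
  have hne_one : tdist G.adj x y ≠ (1, n + 1) := fun h =>
    one_ne_zero (congrArg Prod.fst (G.eq_zero_of_pnum_self_ne_zero (h ▸ hh)))
  have hne_two : tdist G.adj x y ≠ (2, n) := fun h => hh (h ▸ G.pnum_two_eq_zero hCp hPure hn)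
  have hback := G.ddist_le_of_pnum_ne_zero hCp hPure hn hh rfl
  have hxz' := tdist_eq_iff.mp hxz
  have hzy' := tdist_eq_iff.mp hzy
  have hne : ddist G.adj x y ≠ 0 := fun h0 => by
    obtain rfl := (ddist_eq_zero_iff G.strong).mp h0
    omega
  have := ddist_triangle G.strong x z y
  have := ddist_triangle G.strong z y x
  simp only [Set.mem_insert_iff, Set.mem_singleton_iff, ne_eq, tdist_eq_iff] at hne_one hne_two ⊢
  omega

end ConfigurationC

end CTWDR

/-- Lemma 2.5(ii): if `C(q)` exists, then
`Γ_{1,q-1}^2 = {Γ_{1,q-2}}` or `Γ_{1,q-1}^2 = {Γ_{1,q-2}, Γ_{2,q-1}}`. -/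
theorem stmt5 {V : Type*} [Fintype V] (G : CTWDR V) (q : ℕ) (hC : G.Cexists q) :
    G.pow (1, q - 1) 2 = {(1, q - 2)} ∨
    G.pow (1, q - 1) 2 = ({(1, q - 2), (2, q - 1)} : Set (ℕ × ℕ)) := by
  obtain ⟨hCp, hPure⟩ := hC
  obtain ⟨x, y, hxy⟩ := G.attained_of_pnum_ne_zero hCp
  have hn := pos_of_tdist_eq_one G.strong hxy
  obtain ⟨n, rfl⟩ : ∃ n, q = n + 2 := ⟨q - 2, by omega⟩
  rw [show n + 2 - 1 = n + 1 by omega, show n + 2 - 2 = n by omega] at *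
  have hmem : (1, n) ∈ G.pow (1, n + 1) 2 := by
    rw [G.pow_two_eq]
    exact hCp
  rcases Set.subset_pair_iff_eq.mp (G.pow_two_subset hCp hPure hn) with h | h | h | h
  · simp [h] at hmem
  · exact Or.inl h
  · simp [h] at hmem
  · exact Or.inr h
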